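/- arXiv:2204.12705 — 6 statements merged into one kernel-verified Lean document; each statement's English description precedes it below -/
import Mathlib

section
/- Let M be a matroid on finite ground set E with a total order <, and let B be a basis (or any independent set) of M. Then the set Ext_M(B) of externally active elements of B (elements e ∈ E\B such that B ∪ {e} contains an M-circuit with e as its minimal element) is independent in the dual matroid M*. -/
open Matroid Set
open scoped Classical

variable {α : Type*}

/-- A circuit of a matroid: a minimal dependent set. -/
def Circ (M : Matroid α) (C : Set α) : Prop := Minimal M.Dep C

/-- Contraction of a set `X` in a matroid `M`, defined via duality and restriction. -/
def mcon (M : Matroid α) (X : Set α) : Matroid α := (M✶ ↾ (M✶.E \ X))✶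

/-- The rank of a matroid: the (common) cardinality of its bases. -/
noncomputable def rkN (M : Matroid α) : ℕ := sSup (Set.ncard '' {B | M.IsBase B})

/-- The rank of a set `X` in a matroid `M`. -/
noncomputable def rset (M : Matroid α) (X : Set α) : ℕ := rkN (M ↾ X)

/-- `e` is the minimal element of the set `C`. -/
def IsMinOf [LinearOrder α] (e : α) (C : Set α) : Prop := e ∈ C ∧ ∀ f ∈ C, e ≤ f

/-- `e` is externally active in `M` with respect to `X`. -/
def ExtAct [LinearOrder α] (M : Matroid α) (X : Set α) (e : α) : Prop :=
  e ∈ M.E \ X ∧ ∃ C, Circ M C ∧ C ⊆ insert e X ∧ IsMinOf e C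

/-- `e` is internally active in `M'` with respect to `X`. -/
def IntAct [LinearOrder α] (M' : Matroid α) (X : Set α) (e : α) : Prop :=
  e ∈ X ∧ ∃ C, Circ (M'✶) C ∧ C ⊆ insert e (M'.E \ X) ∧ IsMinOf e C

/-- The set `Ext_M(X)` of externally active elements. -/
def ExtSet [LinearOrder α] (M : Matroid α) (X : Set α) : Set α := {e | ExtAct M X e}

/-- The set `Int_{M'}(X)` of internally active elements. -/
def IntSet [LinearOrder α] (M' : Matroid α) (X : Set α) : Set α := {e | IntAct M' X e}

/-- `Y` is `(M,<)`-compatible: no `M`-circuit `C` satisfies `Y ∩ C = {min C}`. -/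
def Compat [LinearOrder α] (M : Matroid α) (Y : Set α) : Prop :=
  ¬ ∃ C e, Circ M C ∧ IsMinOf e C ∧ Y ∩ C = {e}

/-- `(M, M')` is a matroid perspective: same ground set, and every circuit of `M`
is a union of circuits of `M'` (equivalently, every point of an `M`-circuit `C` lies in
an `M'`-circuit contained in `C`). -/
def Perspective (M M' : Matroid α) : Prop :=
  M.E = M'.E ∧ ∀ C, Circ M C → ∀ x ∈ C, ∃ C', Circ M' C' ∧ C' ⊆ C ∧ x ∈ C'

/-- `A` is lexicographically smaller than `B` (at the minimal element where they differ). -/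
def LexLT [LinearOrder α] (A B : Set α) : Prop :=
  ∃ e, e ∈ A ∧ e ∉ B ∧ ∀ f, f < e → (f ∈ A ↔ f ∈ B)

/-- `B` is the lexicographically minimal basis of `M`. -/
def MinBasis [LinearOrder α] (M : Matroid α) (B : Set α) : Prop :=
  M.IsBase B ∧ ∀ B', M.IsBase B' → ¬ LexLT B' B

/-- The collection `D(M, M', <)` of compatible sets of a matroid perspective. -/
def DSet [LinearOrder α] (M M' : Matroid α) : Set (Set α) :=
  {X | X ⊆ M.E ∧ Compat (M'✶) X ∧ Compat M (M.E \ X)}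

/-- The set of externally active elements of an independent set `B` is independent
in the dual matroid. -/
theorem ext_indep_dual [Fintype α] [LinearOrder α] (M : Matroid α) (B : Set α)
    (hB : M.Indep B) : (M✶).Indep (ExtSet M B) := by
  have hsub : ExtSet M B ⊆ M.closure B \ B := by
    rintro e ⟨⟨heE, heB⟩, C, hC, hCsub, heC, -⟩
    refine ⟨?_, heB⟩
    have hCe : C \ {e} ⊆ B := by
      intro x hx
      rcases hCsub hx.1 with rfl | h
      · exact absurd rfl hx.2
      · exact h
    have hind : M.Indep (C \ {e}) := hB.subset hCe
    have hdep : ¬ M.Indep C := hC.1.1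
    have : e ∈ M.closure (C \ {e}) := by
      by_contra hcl
      have : M.Indep (insert e (C \ {e})) := by
        rw [hind.insert_indep_iff]
        left; exact ⟨heE, hcl⟩
      rw [insert_diff_singleton, insert_eq_self.2 heC] at this
      exact hdep this
    exact M.closure_mono hCe this
  obtain ⟨B', hB', hBB'⟩ := hB.exists_isBase_superset
  rw [← coindep_def, coindep_iff_subset_compl_isBase]
  refine ⟨B', hB', fun e he => ⟨he.1.1, fun heB' => ?_⟩⟩
  obtain ⟨hecl, heB⟩ := hsub he
  have : M.Indep (insert e B) := hB'.indep.subset (insert_subset heB' hBB')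
  rw [hB.insert_indep_iff, or_iff_left heB] at this
  exact this.2 hecl
end

section
/- Let (M, M') be a matroid perspective on a finite totally ordered ground set E, and let B ⊆ E be independent in M and spanning in M'. Define X = (B \ Int_{M'}(B)) ∪ Ext_M(B). Then E\X is (M,<)-compatible, i.e., there is no circuit C of M with C ∩ (E\X) = {min(C)}. -/
open Matroid Set
open scoped Classical

variable {α : Type*}

lemma Circ.dep {M : Matroid α} {C : Set α} (h : Circ M C) : M.Dep C := h.prop

lemma Circ.subset_ground {M : Matroid α} {C : Set α} (h : Circ M C) : C ⊆ M.E :=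
  h.prop.subset_ground

lemma Circ.ssubset_indep {M : Matroid α} {C D : Set α} (h : Circ M C) (hD : D ⊂ C) :
    M.Indep D := by
  rw [← not_dep_iff (hD.subset.trans h.subset_ground)]
  intro hdep
  exact hD.not_subset (h.2 hdep hD.subset)

lemma Circ.diff_indep {M : Matroid α} {C : Set α} {e : α} (h : Circ M C) (he : e ∈ C) :
    M.Indep (C \ {e}) :=
  h.ssubset_indep (sdiff_singleton_ssubset.mpr he)

lemma Circ.mem_closure {M : Matroid α} {C : Set α} {e : α} (h : Circ M C) (he : e ∈ C) :
    e ∈ M.closure (C \ {e}) := by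
  have hi := h.diff_indep he
  have := hi.insert_dep_iff.mp (by rw [insert_diff_singleton, insert_eq_of_mem he]; exact h.dep)
  exact this.1

lemma exists_circ_of_dep [Fintype α] {M : Matroid α} {D : Set α} (hD : M.Dep D) :
    ∃ C, Circ M C ∧ C ⊆ D := by
  obtain ⟨C, hCD, hC⟩ := exists_minimal_le_of_wellFoundedLT M.Dep D hD
  exact ⟨C, hC, hCD⟩

lemma exists_circ_of_mem_closure [Fintype α] {M : Matroid α} {S : Set α} {e : α}
    (hS : S ⊆ M.E) (he : e ∈ M.closure S) (heS : e ∉ S) :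
    ∃ C, Circ M C ∧ e ∈ C ∧ C ⊆ insert e S := by
  obtain ⟨I, hI⟩ := M.exists_isBasis S hS
  have heI : e ∈ M.closure I := by rwa [hI.closure_eq_closure]
  have hdep : M.Dep (insert e I) :=
    hI.indep.insert_dep_iff.mpr ⟨heI, fun h => heS (hI.subset h)⟩
  obtain ⟨C, hC, hCsub⟩ := exists_circ_of_dep hdep
  have heC : e ∈ C := by
    by_contra heC
    exact hC.dep.not_indep (hI.indep.subset (by
      intro x hx
      rcases hCsub hx with h | h
      · exact absurd (h ▸ hx) heC
      · exact h))
  exact ⟨C, hC, heC, hCsub.trans (insert_subset_insert hI.subset)⟩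

lemma circ_elim [Fintype α] {M : Matroid α} {C₁ C₂ : Set α} {e f : α}
    (h₁ : Circ M C₁) (h₂ : Circ M C₂) (hf₁ : f ∈ C₁) (hf₂ : f ∈ C₂)
    (he₁ : e ∈ C₁) (he₂ : e ∉ C₂) :
    ∃ C, Circ M C ∧ e ∈ C ∧ C ⊆ (C₁ ∪ C₂) \ {f} := by
  have hef : e ≠ f := fun h => he₂ (h ▸ hf₂)
  set A : Set α := (C₁ ∪ C₂) \ {e, f} with hA
  have hAE : A ⊆ M.E := diff_subset.trans (union_subset h₁.subset_ground h₂.subset_ground)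
  have hfA : f ∈ M.closure A := by
    have h1 : C₂ \ {f} ⊆ A := by
      intro x hx
      exact ⟨Or.inr hx.1, by
        rintro (rfl | rfl)
        · exact he₂ hx.1
        · exact hx.2 rfl⟩
    exact M.closure_subset_closure h1 (h₂.mem_closure hf₂)
  have hclA : M.closure (insert f A) = M.closure A := closure_insert_eq_of_mem_closure hfA
  have heA : e ∈ M.closure A := by
    have h2 : C₁ \ {e} ⊆ insert f A := by
      intro x hx
      by_cases hxf : x = f
      · exact hxf ▸ mem_insert _ _
      · exact Or.inr ⟨Or.inl hx.1, by rintro (rfl | rfl); exacts [hx.2 rfl, hxf rfl]⟩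
    have := M.closure_subset_closure h2 (h₁.mem_closure he₁)
    rwa [hclA] at this
  have heA' : e ∉ A := fun h => h.2 (Or.inl rfl)
  obtain ⟨C, hC, heC, hCsub⟩ := exists_circ_of_mem_closure hAE heA heA'
  refine ⟨C, hC, heC, hCsub.trans ?_⟩
  intro x hx
  rcases hx with rfl | hx
  · exact ⟨Or.inl he₁, by simpa using hef⟩
  · exact ⟨hx.1, fun h => hx.2 (Or.inr h)⟩

lemma circ_cocirc [Fintype α] {M : Matroid α} {C D : Set α} {f : α}
    (hC : Circ M C) (hD : Circ M✶ D) (hCD : C ∩ D = {f}) : False := by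
  have hfCD : f ∈ C ∩ D := by rw [hCD]; exact rfl
  have hfC : f ∈ C := hfCD.1
  have hfD : f ∈ D := hfCD.2
  have hDE : D ⊆ M.E := hD.subset_ground.trans_eq M.dual_ground
  -- M.E \ D is not spanning
  have hnsp : ¬ M.Spanning (M.E \ D) := by
    intro hsp
    exact hD.dep.not_indep ((coindep_iff_compl_spanning hDE).mpr hsp)
  -- but f ∈ closure (M.E \ D), and (M.E \ D) ∪ {f} is spanning
  have hcoind : M.Coindep (D \ {f}) := by
    have := hD.diff_indep hfD
    exact this
  have hsp' : M.Spanning (M.E \ (D \ {f})) := hcoind.compl_spanning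
  have hfcl : f ∈ M.closure (M.E \ D) := by
    refine M.closure_subset_closure ?_ (hC.mem_closure hfC)
    intro x hx
    refine ⟨hC.subset_ground hx.1, fun hxD => hx.2 ?_⟩
    have : x ∈ C ∩ D := ⟨hx.1, hxD⟩
    rwa [hCD] at this
  have heq : M.E \ (D \ {f}) = insert f (M.E \ D) := by
    ext x
    simp only [mem_diff, mem_singleton_iff, mem_insert_iff, not_and, not_not]
    constructor
    · rintro ⟨hx, h⟩
      by_cases hxD : x ∈ D
      · exact Or.inl (h hxD)
      · exact Or.inr ⟨hx, hxD⟩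
    · rintro (rfl | ⟨hx, hxD⟩)
      · exact ⟨hDE hfD, fun _ => rfl⟩
      · exact ⟨hx, fun h => absurd h hxD⟩
  apply hnsp
  rw [spanning_iff_closure_eq]
  have := hsp'.closure_eq
  rw [heq] at this
  rwa [← closure_insert_eq_of_mem_closure hfcl]

lemma ext_active_aux [Fintype α] [LinearOrder α] (M : Matroid α) (B : Set α) (e : α) :
    ∀ n : ℕ, ∀ C : Set α, Circ M C → e ∈ C → (∀ g ∈ C, e ≤ g) →
      C \ insert e B ⊆ ExtSet M B → (C \ insert e B).ncard ≤ n →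
      ∃ C₀, Circ M C₀ ∧ C₀ ⊆ insert e B ∧ IsMinOf e C₀ := by
  intro n
  induction n with
  | zero =>
    intro C hC heC hmin hsub hcard
    have hemp : C \ insert e B = ∅ := by
      rwa [Nat.le_zero, Set.ncard_eq_zero (Set.toFinite _)] at hcard
    exact ⟨C, hC, diff_eq_empty.mp hemp, heC, hmin⟩
  | succ n ih =>
    intro C hC heC hmin hsub hcard
    by_cases hemp : C \ insert e B = ∅
    · exact ⟨C, hC, diff_eq_empty.mp hemp, heC, hmin⟩
    obtain ⟨f, hf⟩ := nonempty_iff_ne_empty.mpr hemp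
    obtain ⟨hfEB, Cf, hCf, hCfsub, hCfmin⟩ := hsub hf
    have hfC : f ∈ C := hf.1
    have hef : e < f := lt_of_le_of_ne (hmin f hfC) (fun h => hf.2 (h ▸ mem_insert e B))
    have henCf : e ∉ Cf := fun h => absurd (hCfmin.2 e h) (not_le.mpr hef)
    obtain ⟨C₁, hC₁, heC₁, hC₁sub⟩ := circ_elim hC hCf hfC hCfmin.1 heC henCf
    have hkey : C₁ \ insert e B ⊆ (C \ insert e B) \ {f} := by
      intro g hg
      have hg' := hC₁sub hg.1
      have hgC : g ∈ C := by
        rcases hg'.1 with h | h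
        · exact h
        · rcases hCfsub h with h2 | h2
          · exact absurd h2 (by simpa using hg'.2)
          · exact absurd (Or.inr h2) hg.2
      exact ⟨⟨hgC, hg.2⟩, hg'.2⟩
    refine ih C₁ hC₁ heC₁ ?_ (hkey.trans (diff_subset.trans hsub)) ?_
    · intro g hg
      rcases (hC₁sub hg).1 with h | h
      · exact hmin g h
      · exact le_of_lt (lt_of_lt_of_le hef (hCfmin.2 g h))
    · have h1 : (C₁ \ insert e B).ncard ≤ ((C \ insert e B) \ {f}).ncard :=
        Set.ncard_le_ncard hkey (Set.toFinite _)
      have h2 : ((C \ insert e B) \ {f}).ncard = (C \ insert e B).ncard - 1 :=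
        Set.ncard_diff_singleton_of_mem hf
      omega
      


/-- For `B` independent in `M` and spanning in `M'`, the complement of
`X = (B \ Int_{M'}(B)) ∪ Ext_M(B)` is `(M,<)`-compatible. -/
theorem compl_f_compatible [Fintype α] [LinearOrder α] (M M' : Matroid α)
    (hP : Perspective M M') (B : Set α) (hBi : M.Indep B) (hBs : M'.Spanning B) :
    Compat M (M.E \ ((B \ IntSet M' B) ∪ ExtSet M B)) := by
  rintro ⟨C, e, hC, hmin, hEq⟩
  set X := (B \ IntSet M' B) ∪ ExtSet M B with hX
  have heX : e ∈ (M.E \ X) ∩ C := by rw [hEq]; exact rfl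
  have heC : e ∈ C := heX.2
  have heE : e ∈ M.E := heX.1.1
  have henX : e ∉ X := heX.1.2
  have hCX : ∀ g ∈ C, g ≠ e → g ∈ X := by
    intro g hg hne
    by_contra hgX
    have h' : g ∈ (M.E \ X) ∩ C := ⟨⟨hC.subset_ground hg, hgX⟩, hg⟩
    rw [hEq] at h'
    exact hne h'
  by_cases heB : e ∈ B
  · -- internal case
    have heInt : e ∈ IntSet M' B := by
      by_contra h
      exact henX (Or.inl ⟨heB, h⟩)
    obtain ⟨-, D, hD, hDsub, hDmin⟩ := heInt
    obtain ⟨C', hC', hC'sub, heC'⟩ := hP.2 C hC e heC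
    have hne : C' ∩ D ≠ {e} := fun h => circ_cocirc hC' hD h
    obtain ⟨f, hfCD, hfe⟩ : ∃ f, f ∈ C' ∩ D ∧ f ≠ e := by
      by_contra h
      push_neg at h
      apply hne
      apply subset_antisymm
      · intro x hx
        exact h x hx
      · intro x hx
        rw [mem_singleton_iff] at hx
        exact hx ▸ ⟨heC', hDmin.1⟩
    have hfC : f ∈ C := hC'sub hfCD.1
    have hfX : f ∈ X := hCX f hfC hfe
    have hfnB : f ∉ B := by
      rcases hDsub hfCD.2 with h | h
      · exact absurd h hfe
      · exact h.2
    have hfExt : f ∈ ExtSet M B := by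
      rcases hfX with h | h
      · exact absurd h.1 hfnB
      · exact h
    obtain ⟨-, Cf, hCf, hCfsub, hCfmin⟩ := hfExt
    obtain ⟨C'', hC'', hC''sub, hfC''⟩ := hP.2 Cf hCf f hCfmin.1
    apply circ_cocirc hC'' hD (f := f)
    apply subset_antisymm
    · rintro x ⟨hx1, hx2⟩
      rw [mem_singleton_iff]
      by_contra hxf
      have hxB : x ∈ B := by
        rcases hCfsub (hC''sub hx1) with h | h
        · exact absurd h hxf
        · exact h
      rcases hDsub hx2 with h | h
      · subst h
        exact hfe (le_antisymm (hCfmin.2 x (hC''sub hx1)) (hmin.2 f hfC))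
      · exact h.2 hxB
    · intro x hx
      rw [mem_singleton_iff] at hx
      exact hx ▸ ⟨hfC'', hfCD.2⟩
  · -- external case
    have hsub : C \ insert e B ⊆ ExtSet M B := by
      rintro g ⟨hgC, hg⟩
      have hgne : g ≠ e := fun h => hg (h ▸ mem_insert e B)
      rcases hCX g hgC hgne with h | h
      · exact absurd (Or.inr h.1) hg
      · exact h
    obtain ⟨C₀, hC₀, hC₀sub, hC₀min⟩ :=
      ext_active_aux M B e (C \ insert e B).ncard C hC heC hmin.2 hsub le_rfl
    exact henX (Or.inr ⟨⟨heE, heB⟩, C₀, hC₀, hC₀sub, hC₀min⟩)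
end

section
/- Let (M, M') be a matroid perspective on a finite totally ordered ground set E, and let B ⊆ E be independent in M and spanning in M'. Define X = (B \ Int_{M'}(B)) ∪ Ext_M(B). Then X is ((M')*,<)-compatible, i.e., there is no circuit C of (M')* with X ∩ C = {min(C)}. -/
open Matroid Set
open scoped Classical

variable {α : Type*}

section AuxCirc

variable {N : Matroid α} {C C₁ C₂ D S X : Set α} {e f g : α}

lemma Circ.dep_s3 (h : Circ N C) : N.Dep C := h.1

lemma Circ.subset_ground_s3 (h : Circ N C) : C ⊆ N.E := h.1.2

lemma Circ.ssubset_indep_s3 (h : Circ N C) (hD : D ⊂ C) : N.Indep D := by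
  by_contra hi
  exact hD.not_subset (h.2 ⟨hi, hD.subset.trans h.subset_ground_s3⟩ hD.subset)

lemma exists_circ_of_dep_s3 [Fintype α] (h : N.Dep X) : ∃ C, Circ N C ∧ C ⊆ X := by
  obtain ⟨C, hCX, hC⟩ := exists_minimal_le_of_wellFoundedLT _ X h
  exact ⟨C, hC, hCX⟩

lemma mem_closure_circ [Fintype α] (hS : S ⊆ N.E) (heS : e ∉ S) (he : e ∈ N.closure S) :
    ∃ C, Circ N C ∧ e ∈ C ∧ C ⊆ insert e S := by
  obtain ⟨I, hI⟩ := N.exists_isBasis S hS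
  have heI : e ∈ N.closure I := by rwa [hI.closure_eq_closure]
  have heI' : e ∉ I := fun h => heS (hI.subset h)
  have hdep : N.Dep (insert e I) := hI.indep.insert_dep_iff.2 ⟨heI, heI'⟩
  obtain ⟨C, hC, hCsub⟩ := exists_circ_of_dep_s3 hdep
  refine ⟨C, hC, ?_, hCsub.trans (insert_subset_insert hI.subset)⟩
  by_contra heC
  exact hC.dep_s3.not_indep (hI.indep.subset (fun x hx =>
    ((hCsub hx).resolve_left (fun h => heC (h ▸ hx)))))

lemma circ_mem_closure_diff (hC : Circ N C) (he : e ∈ C) : e ∈ N.closure (C \ {e}) := by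
  have hI : N.Indep (C \ {e}) := hC.ssubset_indep_s3 (sdiff_singleton_ssubset.2 he)
  rw [hI.mem_closure_iff]
  left
  rw [insert_diff_singleton, insert_eq_of_mem he]
  exact hC.dep_s3

/-- Strong circuit elimination. -/
lemma circ_elim_s3 [Fintype α] (hC₁ : Circ N C₁) (hC₂ : Circ N C₂) (hg₁ : g ∈ C₁) (hg₂ : g ∈ C₂)
    (he₁ : e ∈ C₁) (he₂ : e ∉ C₂) :
    ∃ C, Circ N C ∧ e ∈ C ∧ C ⊆ (C₁ ∪ C₂) \ {g} := by
  have hne : e ≠ g := fun h => he₂ (h ▸ hg₂)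
  set A : Set α := (C₁ ∪ C₂) \ {g, e} with hA
  have hAE : A ⊆ N.E := diff_subset.trans (union_subset hC₁.subset_ground_s3 hC₂.subset_ground_s3)
  have hgA : g ∈ N.closure A := by
    refine mem_of_mem_of_subset (circ_mem_closure_diff hC₂ hg₂) (N.closure_subset_closure ?_)
    intro x hx
    refine ⟨Or.inr hx.1, ?_⟩
    simp only [mem_insert_iff, mem_singleton_iff, not_or]
    exact ⟨fun h => hx.2 h, fun h => he₂ (h ▸ hx.1)⟩
  have heA : e ∈ N.closure A := by
    have h1 : C₁ \ {e} ⊆ insert g A := by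
      intro x hx
      by_cases hxg : x = g
      · exact hxg ▸ mem_insert _ _
      · refine mem_insert_of_mem _ ⟨Or.inl hx.1, ?_⟩
        simp only [mem_insert_iff, mem_singleton_iff, not_or]
        exact ⟨hxg, fun h => hx.2 h⟩
    have h2 : N.closure (insert g A) = N.closure A := closure_insert_eq_of_mem_closure hgA
    exact h2 ▸ mem_of_mem_of_subset (circ_mem_closure_diff hC₁ he₁)
      (N.closure_subset_closure h1)
  have heA' : e ∉ A := fun h => h.2 (Or.inr rfl)
  obtain ⟨C, hC, heC, hsub⟩ := mem_closure_circ hAE heA' heA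
  refine ⟨C, hC, heC, hsub.trans ?_⟩
  rintro x (rfl | hx)
  · exact ⟨Or.inl he₁, by simpa using hne⟩
  · exact ⟨hx.1, fun h => hx.2 (mem_insert_iff.2 (Or.inl (by simpa using h)))⟩

/-- A circuit and a cocircuit cannot meet in exactly one element. -/
lemma circ_cocirc_s3 (hD : Circ N D) (hC : Circ (N✶) C) (hf : f ∈ D) (hf' : f ∈ C) :
    ∃ x, x ∈ D ∧ x ∈ C ∧ x ≠ f := by
  by_contra h
  push_neg at h
  have hfE : f ∈ N.E := hD.subset_ground_s3 hf
  have hD' : D \ {f} ⊆ N.E \ C := fun x hx =>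
    ⟨hD.subset_ground_s3 hx.1, fun hxC => hx.2 (h x hx.1 hxC)⟩
  have h1 : f ∈ N.closure (N.E \ C) :=
    mem_of_mem_of_subset (circ_mem_closure_diff hD hf) (N.closure_subset_closure hD')
  have hCindep : N✶.Indep (C \ {f}) := hC.ssubset_indep_s3 (sdiff_singleton_ssubset.2 hf')
  have hsp : N.Spanning (N.E \ (C \ {f})) := Matroid.Coindep.compl_spanning hCindep
  have heq : N.E \ (C \ {f}) = insert f (N.E \ C) := by
    ext x
    simp only [mem_diff, mem_insert_iff, mem_singleton_iff]
    constructor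
    · rintro ⟨hxE, hx⟩
      by_cases hxf : x = f
      · exact Or.inl hxf
      · exact Or.inr ⟨hxE, fun hxC => hx ⟨hxC, hxf⟩⟩
    · rintro (rfl | ⟨hxE, hxC⟩)
      · exact ⟨hfE, fun hh => hh.2 rfl⟩
      · exact ⟨hxE, fun hh => hxC hh.1⟩
  rw [heq, spanning_iff_closure_eq (insert_subset hfE diff_subset),
    closure_insert_eq_of_mem_closure h1] at hsp
  have hsp2 : N.Spanning (N.E \ C) := (spanning_iff_closure_eq diff_subset).2 hsp
  have hco : N.Coindep C := (coindep_iff_compl_spanning (M := N) hC.subset_ground_s3).2 hsp2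
  exact hC.dep_s3.not_indep hco

/-- Key induction: a circuit of `M'✶` with minimum `e ∈ B`, all of whose other `B`-elements
are internally active, can be converted into one witnessing internal activity of `e`. -/
lemma no_cocirc [Fintype α] [LinearOrder α] (M' : Matroid α) (B : Set α) (e : α)
    (heB : e ∈ B) (heI : ¬ IntAct M' B e) :
    ∀ n C, (C ∩ (B \ {e})).ncard = n → Circ (M'✶) C → e ∈ C →
      (∀ x ∈ C, e ≤ x) → (∀ x ∈ C, x ∈ B → x ≠ e → IntAct M' B x) → False := by
  intro n
  induction n using Nat.strong_induction_on with
  | _ n ih =>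
  intro C hcard hC heC hmin hint
  by_cases hCB : ∀ x ∈ C, x ∈ B → x = e
  · apply heI
    refine ⟨heB, C, hC, ?_, heC, hmin⟩
    intro x hx
    by_cases hxB : x ∈ B
    · exact (hCB x hx hxB) ▸ mem_insert _ _
    · exact mem_insert_of_mem _ ⟨hC.subset_ground_s3 hx, hxB⟩
  · push_neg at hCB
    obtain ⟨g, hgC, hgB, hge⟩ := hCB
    obtain ⟨-, Cg, hCg, hCgsub, hgm⟩ := hint g hgC hgB hge
    have heg : e < g := lt_of_le_of_ne (hmin g hgC) (Ne.symm hge)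
    have heCg : e ∉ Cg := by
      intro h
      rcases hCgsub h with h' | h'
      · exact hge h'.symm
      · exact h'.2 heB
    obtain ⟨C', hC', heC', hsub⟩ := circ_elim_s3 hC hCg hgC hgm.1 heC heCg
    have hC'B : ∀ x ∈ C', x ∈ B → x ∈ C := by
      intro x hx hxB
      rcases (hsub hx).1 with h | h
      · exact h
      · rcases hCgsub h with h' | h'
        · exact absurd h' (by simpa using (hsub hx).2)
        · exact absurd hxB h'.2
    refine ih ((C' ∩ (B \ {e})).ncard) ?_ C' rfl hC' heC' ?_ ?_
    · have hss : C' ∩ (B \ {e}) ⊆ (C ∩ (B \ {e})) \ {g} := fun x hx =>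
        ⟨⟨hC'B x hx.1 hx.2.1, hx.2⟩, (hsub hx.1).2⟩
      calc (C' ∩ (B \ {e})).ncard ≤ ((C ∩ (B \ {e})) \ {g}).ncard :=
            Set.ncard_le_ncard hss (Set.toFinite _)
        _ < (C ∩ (B \ {e})).ncard :=
            Set.ncard_diff_singleton_lt_of_mem ⟨hgC, hgB, hge⟩ (Set.toFinite _)
        _ = n := hcard
    · intro x hx
      rcases (hsub hx).1 with h | h
      · exact hmin x h
      · exact le_of_lt (lt_of_lt_of_le heg (hgm.2 x h))
    · intro x hx hxB hxe
      exact hint x (hC'B x hx hxB) hxB hxe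

end AuxCirc

/-- For `B` independent in `M` and spanning in `M'`, the set
`X = (B \ Int_{M'}(B)) ∪ Ext_M(B)` is `((M')✶,<)`-compatible. -/
theorem f_compatible [Fintype α] [LinearOrder α] (M M' : Matroid α)
    (hP : Perspective M M') (B : Set α) (hBi : M.Indep B) (hBs : M'.Spanning B) :
    Compat (M'✶) ((B \ IntSet M' B) ∪ ExtSet M B) := by
  intro h
  obtain ⟨C, e, hC, hm, hXC⟩ := h
  have heC : e ∈ C := hm.1
  have hmin : ∀ x ∈ C, e ≤ x := hm.2
  have heX : e ∈ (B \ IntSet M' B) ∪ ExtSet M B := by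
    have : e ∈ ((B \ IntSet M' B) ∪ ExtSet M B) ∩ C := by
      rw [hXC]; exact mem_singleton e
    exact this.1
  rcases heX with heX | heX
  · -- internal case
    have heB : e ∈ B := heX.1
    have heI : ¬ IntAct M' B e := heX.2
    refine no_cocirc M' B e heB heI _ C rfl hC heC hmin ?_
    intro x hx hxB hxe
    have hxX : x ∉ (B \ IntSet M' B) ∪ ExtSet M B := by
      intro hxm
      exact hxe (by have : x ∈ ({e} : Set α) := hXC ▸ ⟨hxm, hx⟩; exact this)
    by_contra hxI
    exact hxX (Or.inl ⟨hxB, hxI⟩)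
  · -- external case
    obtain ⟨⟨heE, heB⟩, D, hD, hDsub, hDm⟩ := heX
    obtain ⟨D', hD', hD'D, heD'⟩ := hP.2 D hD e hDm.1
    obtain ⟨f, hfD', hfC, hfe⟩ := circ_cocirc_s3 hD' hC heD' heC
    have hfB : f ∈ B := by
      rcases hDsub (hD'D hfD') with h | h
      · exact absurd h hfe
      · exact h
    have hfX : f ∉ (B \ IntSet M' B) ∪ ExtSet M B := by
      intro hfm
      exact hfe (by have : f ∈ ({e} : Set α) := hXC ▸ ⟨hfm, hfC⟩; exact this)
    have hfI : IntAct M' B f := by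
      by_contra h
      exact hfX (Or.inl ⟨hfB, h⟩)
    obtain ⟨-, Cf, hCf, hCfsub, hfm⟩ := hfI
    obtain ⟨x, hxD', hxCf, hxf⟩ := circ_cocirc_s3 hD' hCf hfD' hfm.1
    have hxB : x ∉ B := by
      rcases hCfsub hxCf with h | h
      · exact absurd h hxf
      · exact h.2
    have hxe : x = e := by
      rcases hDsub (hD'D hxD') with h | h
      · exact h
      · exact absurd h hxB
    have hle : f ≤ e := hxe ▸ hfm.2 x hxCf
    have hlt : e < f := lt_of_le_of_ne (hmin f hfC) (Ne.symm hfe)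
    exact absurd hle (not_le.2 hlt)
end

section
/- Let (M, M') be a matroid perspective on a finite totally ordered ground set E, and let X ∈ D(M, M', <), i.e., X is ((M')*,<)-compatible and E\X is (M,<)-compatible. Let B = (X \ B_min((M|X)*)) ∪ B_min(M'/X), where B_min denotes the lexicographically minimal basis. Then B is independent in M and spanning in M'. -/
open Matroid Set
open scoped Classical

variable {α : Type*}

/-- Every dependent set contains a circuit (finite case). -/
lemma exists_circ_subset [Fintype α] {M : Matroid α} {S : Set α} (hS : M.Dep S) :
    ∃ C, Circ M C ∧ C ⊆ S := by
  obtain ⟨C, hC, hmin⟩ := exists_minimal_of_wellFoundedLT (fun D => M.Dep D ∧ D ⊆ S)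
    ⟨S, hS, Subset.rfl⟩
  refine ⟨C, ⟨hC.1, fun D hD hDC => ?_⟩, hC.2⟩
  exact hmin ⟨hD, hDC.trans hC.2⟩ hDC

/-- Each element of a circuit is in the closure of the rest of the circuit. -/
lemma circ_mem_closure {M : Matroid α} {C : Set α} {e : α} (hC : Circ M C) (he : e ∈ C) :
    e ∈ M.closure (C \ {e}) := by
  have hCE : C ⊆ M.E := hC.1.subset_ground
  have hind : M.Indep (C \ {e}) := by
    rw [← not_dep_iff (diff_subset.trans hCE)]
    intro hd
    exact (hC.2 hd diff_subset he).2 rfl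
  have hdep : M.Dep (insert e (C \ {e})) := by
    rw [insert_diff_singleton, insert_eq_of_mem he]
    exact hC.1
  exact hind.mem_closure_iff.mpr (Or.inl hdep)

/-- For a perspective `(M, M')`, closures in `M` are contained in closures in `M'`. -/
lemma persp_closure_subset [Fintype α] {M M' : Matroid α} (hP : Perspective M M')
    {S : Set α} (hS : S ⊆ M.E) : M.closure S ⊆ M'.closure S := by
  intro e he
  have hSE' : S ⊆ M'.E := hP.1 ▸ hS
  by_cases heS : e ∈ S
  · exact M'.subset_closure S hSE' heS
  obtain ⟨I, hI⟩ := M.exists_isBasis S hS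
  have heI : e ∈ M.closure I := hI.closure_eq_closure ▸ he
  have heI' : e ∉ I := fun h => heS (hI.subset h)
  have hdep : M.Dep (insert e I) := hI.indep.insert_dep_iff.mpr ⟨heI, heI'⟩
  obtain ⟨C, hC, hCsub⟩ := exists_circ_subset hdep
  have heC : e ∈ C := by
    by_contra h
    refine hC.1.not_indep (hI.indep.subset fun x hx => ?_)
    rcases hCsub hx with h1 | h2
    · exact absurd (h1 ▸ hx) h
    · exact h2
  obtain ⟨C', hC', hC'C, heC'⟩ := hP.2 C hC e heC
  refine M'.closure_subset_closure (fun x hx => ?_) (circ_mem_closure hC' heC')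
  rcases hCsub (hC'C hx.1) with h1 | h2
  · exact (hx.2 (by simp [h1])).elim
  · exact hI.subset h2

/-- For `X ∈ D(M, M', <)`, the set `B = (X \ B_min((M|X)✶)) ∪ B_min(M'/X)` is
independent in `M` and spanning in `M'`. -/
theorem g_indep_spanning [Fintype α] [LinearOrder α] (M M' : Matroid α)
    (hP : Perspective M M') (X : Set α) (hX : X ∈ DSet M M') (B' B'' : Set α)
    (hB' : MinBasis ((M ↾ X)✶) B') (hB'' : MinBasis (mcon M' X) B'') :
    M.Indep ((X \ B') ∪ B'') ∧ M'.Spanning ((X \ B') ∪ B'') := by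
  obtain ⟨hXE, hcomp1, hcomp2⟩ := hX
  have hE : M.E = M'.E := hP.1
  -- `X \ B'` is a basis of `X` in `M`
  have hA : (M ↾ X).IsBase (X \ B') := (dual_isBase_iff'.mp hB'.1).1
  have hAbasis : M.IsBasis (X \ B') X := (isBase_restrict_iff hXE).mp hA
  have hAindep : M.Indep (X \ B') := hAbasis.indep
  -- facts about `B''`
  have hN := dual_isBase_iff'.mp hB''.1
  have hB''sub : B'' ⊆ M'.E \ X := hN.2
  have hKbasis : M'✶.IsBasis ((M'.E \ X) \ B'') (M'.E \ X) :=
    (isBase_restrict_iff diff_subset).mp hN.1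
  have hXB''E : X ∪ B'' ⊆ M'.E := union_subset (hE ▸ hXE) (hB''sub.trans diff_subset)
  have hspanXB : M'.Spanning (X ∪ B'') := by
    rw [spanning_iff_compl_coindep hXB''E]
    have h1 : M'.Coindep ((M'.E \ X) \ B'') := hKbasis.indep
    rwa [diff_diff] at h1
  have hABE : (X \ B') ∪ B'' ⊆ M.E :=
    union_subset (diff_subset.trans hXE) (hE ▸ hB''sub.trans diff_subset)
  constructor
  · by_contra hnI
    have hdep : M.Dep ((X \ B') ∪ B'') := (not_indep_iff hABE).mp hnI
    obtain ⟨C, hC, hCsub⟩ := exists_circ_subset hdep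
    have hnsub : ¬ C ⊆ X \ B' := fun h => hC.1.not_indep (hAindep.subset h)
    obtain ⟨e, heC, heA⟩ := not_subset.mp hnsub
    have heB'' : e ∈ B'' := (hCsub heC).resolve_left heA
    have heE' : e ∈ M'.E := (hB''sub heB'').1
    have he1 : e ∈ M.closure (C \ {e}) := circ_mem_closure hC heC
    have hsub : C \ {e} ⊆ (X ∪ B'') \ {e} :=
      diff_subset_diff_left (hCsub.trans (union_subset_union_left _ diff_subset))
    have hSE : (X ∪ B'') \ {e} ⊆ M.E := diff_subset.trans (hE ▸ hXB''E)
    have he2 : e ∈ M'.closure ((X ∪ B'') \ {e}) :=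
      persp_closure_subset hP hSE (M.closure_subset_closure hsub he1)
    have heXB : e ∈ X ∪ B'' := Or.inr heB''
    have hclT : M'.closure ((X ∪ B'') \ {e}) = M'.E := by
      have h1 : M'.closure (insert e ((X ∪ B'') \ {e})) = M'.closure ((X ∪ B'') \ {e}) :=
        closure_insert_eq_of_mem_closure he2
      rw [insert_diff_singleton, insert_eq_of_mem heXB] at h1
      rw [← h1, hspanXB.closure_eq]
    have hspanT : M'.Spanning ((X ∪ B'') \ {e}) :=
      (spanning_iff_closure_eq (diff_subset.trans hXB''E)).mpr hclT
    have hcoind : M'.Coindep (M'.E \ ((X ∪ B'') \ {e})) :=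
      (spanning_iff_compl_coindep (diff_subset.trans hXB''E)).mp hspanT
    have heq : M'.E \ ((X ∪ B'') \ {e}) = insert e ((M'.E \ X) \ B'') := by
      ext x
      by_cases hxe : x = e
      · subst hxe
        simp [heE', heXB]
      · simp only [mem_diff, mem_union, mem_insert_iff, mem_singleton_iff, hxe, false_or,
          not_and, not_not]
        tauto
    rw [heq] at hcoind
    have hins : M'✶.Indep (insert e ((M'.E \ X) \ B'')) := hcoind
    have heq2 : (M'.E \ X) \ B'' = insert e ((M'.E \ X) \ B'') :=
      hKbasis.eq_of_subset_indep hins (subset_insert _ _)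
        (insert_subset (hB''sub heB'') diff_subset)
    have hmem : e ∈ (M'.E \ X) \ B'' := heq2 ▸ mem_insert e _
    exact hmem.2 heB''
  · have hABE' : (X \ B') ∪ B'' ⊆ M'.E := hE ▸ hABE
    have hsub1 : X ⊆ M'.closure (X \ B') := fun x hx =>
      persp_closure_subset hP (diff_subset.trans hXE) (hAbasis.subset_closure hx)
    rw [spanning_iff_closure_eq hABE']
    have h2 : X ∪ B'' ⊆ M'.closure ((X \ B') ∪ B'') :=
      union_subset (hsub1.trans (M'.closure_subset_closure subset_union_left))
        (subset_union_right.trans (M'.subset_closure _ hABE'))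
    have h3 : M'.closure (X ∪ B'') ⊆ M'.closure ((X \ B') ∪ B'') :=
      closure_subset_closure_of_subset_closure h2
    exact subset_antisymm (M'.closure_subset_ground _) (hspanXB.closure_eq ▸ h3)
end

section
/- Let M be a matroid on a finite totally ordered ground set E and X ⊆ E such that E\X is (M,<)-compatible. Let B' = B_min((M|X)*) be the lexicographically minimal basis of the dual of the restriction M|X, and set B ⊇ X\B' with B ∩ X = X\B'. Then for the set B formed in the bijection g (B = (X\B') ∪ B_min(M'/X) in a matroid perspective), every element of B' is externally active in M with respect to B: B' ⊆ Ext_M(B). -/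
open Matroid Set
open scoped Classical

variable {α : Type*}

/-- Every dependent set contains a circuit (finite case). -/
lemma exists_circ_subset_aux [Fintype α] (M : Matroid α) {D : Set α} (hD : M.Dep D) :
    ∃ C, C ⊆ D ∧ Circ M C := by
  classical
  set S : Set (Set α) := {A | A ⊆ D ∧ M.Dep A} with hS
  have hfin : S.Finite := Set.toFinite _
  have hne : S.Nonempty := ⟨D, Subset.rfl, hD⟩
  obtain ⟨C, hCS, hmin⟩ := hfin.exists_minimalFor id S hne
  refine ⟨C, hCS.1, hCS.2, fun A hA hAC => ?_⟩
  have : A ∈ S := ⟨hAC.trans hCS.1, hA⟩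
  exact hmin this hAC

/-- For `X ∈ D(M, M', <)`, with `B' = B_min((M|X)✶)`, `B'' = B_min(M'/X)` and
`B = (X \ B') ∪ B''`, every element of `B'` is externally active in `M` w.r.t. `B`. -/
theorem minBasis_subset_ext [Fintype α] [LinearOrder α] (M M' : Matroid α)
    (hP : Perspective M M') (X : Set α) (hX : X ∈ DSet M M') (B' B'' : Set α)
    (hB' : MinBasis ((M ↾ X)✶) B') (hB'' : MinBasis (mcon M' X) B'') :
    B' ⊆ ExtSet M ((X \ B') ∪ B'') := by
    classical
  intro e he
  obtain ⟨hXE, _, _⟩ := hX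
  -- B' is a subset of X and X \ B' is a base of M ↾ X
  have hB'base := hB'.1
  have hB'X : B' ⊆ X := by
    have := hB'base.subset_ground
    simpa using this
  have hbase : (M ↾ X).IsBase (X \ B') := by
    have := (Matroid.dual_isBase_iff (M := M ↾ X) (B := B') (by simpa using hB'X)).mp hB'base
    simpa using this
  have heX : e ∈ X := hB'X he
  have henB : e ∉ X \ B' := fun h => h.2 he
  -- insert e (X \ B') is dependent in M ↾ X
  have hdep : (M ↾ X).Dep (insert e (X \ B')) :=
    hbase.insert_dep ⟨by simpa using heX, henB⟩
  obtain ⟨C, hCsub, hC⟩ := exists_circ_subset_aux (M ↾ X) hdep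
  have hCX : C ⊆ X := hCsub.trans (insert_subset heX diff_subset)
  -- C is a circuit of M
  have hCM : Circ M C := by
    refine ⟨?_, fun A hA hAC => ?_⟩
    · have hCd := hC.1
      rw [Matroid.restrict_dep_iff] at hCd
      exact ⟨hCd.1, hCX.trans hXE⟩
    · exact hC.2 (Matroid.restrict_dep_iff.mpr ⟨hA.1, hAC.trans hCX⟩) hAC
  have heC : e ∈ C := by
    by_contra heC
    have : C ⊆ X \ B' := fun x hx => ((hCsub hx).resolve_left (fun h => heC (h ▸ hx)))
    exact (hbase.indep.subset this).not_dep hC.1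
  -- minimality of e in C
  have hmin : ∀ f ∈ C, e ≤ f := by
    intro f hf
    by_contra hef
    push_neg at hef
    have hfne : f ≠ e := ne_of_lt hef
    have hfB : f ∈ X \ B' := (hCsub hf).resolve_left hfne
    -- C \ {f} is independent (proper subset of a circuit)
    have hCf : (M ↾ X).Indep (C \ {f}) := by
      by_contra hni
      have hni' : ¬ M.Indep (C \ {f}) := fun h =>
        hni (Matroid.restrict_indep_iff.mpr ⟨h, diff_subset.trans hCX⟩)
      have hdepCf : (M ↾ X).Dep (C \ {f}) :=
        Matroid.restrict_dep_iff.mpr ⟨hni', diff_subset.trans hCX⟩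
      have hsub := hC.2 hdepCf diff_subset
      exact (hsub hf).2 rfl
    -- extend to a base inside insert e (X \ B') \ {f}
    obtain ⟨B₂, hB₂, hCfB₂, hB₂sub⟩ := hCf.exists_isBase_subset_union_isBase hbase
    have heB₂ : e ∈ B₂ := hCfB₂ ⟨heC, fun h => hfne (Set.mem_singleton_iff.mp h).symm⟩
    have hfB₂ : f ∉ B₂ := by
      intro hfB₂
      have hCB₂ : C ⊆ B₂ := fun x hx => by
        rcases eq_or_ne x f with rfl | hxf
        · exact hfB₂
        · exact hCfB₂ ⟨hx, by simpa using hxf⟩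
      exact (hB₂.indep.subset hCB₂).not_dep hC.1
    have hB₂sub' : B₂ ⊆ insert e (X \ B') \ {f} := by
      intro x hx
      refine ⟨?_, fun hxf => hfB₂ (Set.mem_singleton_iff.mp hxf ▸ hx)⟩
      rcases hB₂sub hx with h | h
      · exact Or.elim (Set.mem_insert_iff.mp (hCsub h.1)) (fun h' => h' ▸ mem_insert _ _)
          (fun h' => mem_insert_of_mem _ h')
      · exact mem_insert_of_mem _ h
    -- B₂ equals insert e (X \ B') \ {f} by cardinality
    have hcard : B₂ = insert e (X \ B') \ {f} := by
      apply Set.eq_of_subset_of_ncard_le hB₂sub' _ (Set.toFinite _)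
      have h1 : B₂.ncard = (X \ B').ncard := hB₂.ncard_eq_ncard_of_isBase hbase
      have h2 : (insert e (X \ B') \ {f}).ncard = (X \ B').ncard := by
        rw [Set.ncard_diff_singleton_of_mem (mem_insert_of_mem _ hfB),
          Set.ncard_insert_of_notMem henB (Set.toFinite _)]
        omega
      omega
    -- the dual base X \ B₂ is lex-smaller than B', contradiction
    have hB₂X : B₂ ⊆ X := hcard ▸ diff_subset.trans (insert_subset heX diff_subset)
    have hdual : ((M ↾ X)✶).IsBase (X \ B₂) := by
      rw [Matroid.dual_isBase_iff (by simpa using (diff_subset : X \ B₂ ⊆ X))]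
      simpa [Set.diff_diff_cancel_left hB₂X] using hB₂
    refine hB'.2 _ hdual ⟨f, ⟨hfB.1, hfB₂⟩, hfB.2, fun g hg => ?_⟩
    have hgf : g ≠ f := ne_of_lt hg
    have hge : g ≠ e := ne_of_lt (hg.trans hef)
    rw [hcard]
    simp only [Set.mem_diff, Set.mem_singleton_iff, Set.mem_insert_iff]
    constructor
    · rintro ⟨hgX, hns⟩
      by_contra hgB'
      exact hns ⟨Or.inr ⟨hgX, hgB'⟩, hgf⟩
    · intro hgB'
      refine ⟨hB'X hgB', ?_⟩
      rintro ⟨h | h, -⟩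
      · exact hge h
      · exact h.2 hgB'
  -- conclude
  refine ⟨⟨hCX.trans hXE heC, ?_⟩, C, hCM, ?_, heC, hmin⟩
  · rintro (h | h)
    · exact h.2 he
    · have := hB''.1.subset_ground
      simp only [mcon, Matroid.dual_ground, Matroid.restrict_ground_eq] at this
      exact (this h).2 heX
  · intro x hx
    rcases Set.mem_insert_iff.mp (hCsub hx) with h | h
    · exact h ▸ mem_insert _ _
    · exact mem_insert_of_mem _ (Or.inl h)
end

section
/- Let M be a matroid on a finite totally ordered ground set E and let B be a basis of M. Set X = (B \ Int_M(B)) ∪ Ext_M(B). Then |Int_M(B)| = r(M/X) and |Ext_M(B)| = r*(M|X), where r* is the rank in the dual matroid (M|X)*. -/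
open Matroid Set
open scoped Classical

variable {α : Type*}

lemma Circ.diff_singleton_indep {M : Matroid α} {C : Set α} (hC : Circ M C) {e : α} (he : e ∈ C) :
    M.Indep (C \ {e}) := by
  rw [← not_dep_iff (diff_subset.trans hC.prop.subset_ground)]
  intro hd
  exact ((hC.2 hd diff_subset) he).2 rfl

lemma Circ.mem_closure_diff {M : Matroid α} {C : Set α} (hC : Circ M C) {e : α} (he : e ∈ C) :
    e ∈ M.closure (C \ {e}) := by
  have hI := hC.diff_singleton_indep he
  have hdep : M.Dep (insert e (C \ {e})) := by
    rw [insert_diff_singleton, insert_eq_of_mem he]; exact hC.prop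
  exact (hI.insert_dep_iff.mp hdep).1

lemma circ_cocirc_s11 {M : Matroid α} {C D : Set α} (hC : Circ M C) (hD : Circ M✶ D) {e : α}
    (heC : e ∈ C) (heD : e ∈ D) : ∃ g, g ∈ C ∧ g ∈ D ∧ g ≠ e := by
  by_contra h
  push_neg at h
  have hss : C \ {e} ⊆ M.E \ (D \ {e}) := by
    rintro y ⟨hyC, hye⟩
    refine ⟨hC.prop.subset_ground hyC, fun hyD => hye (h y hyC hyD.1)⟩
  have hDi : M✶.Indep (D \ {e}) := hD.diff_singleton_indep heD
  have hsp : M.Spanning (M.E \ (D \ {e})) := Coindep.compl_spanning hDi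
  obtain ⟨B, hBbasis, hCB⟩ := (hC.diff_singleton_indep heC).subset_isBasis_of_subset hss
    (diff_subset)
  have hBbase : M.IsBase B := by
    rw [isBase_iff_indep_closure_eq]
    refine ⟨hBbasis.indep, ?_⟩
    rw [hBbasis.closure_eq_closure]
    exact (spanning_iff_closure_eq diff_subset).mp hsp
  obtain ⟨g, hgD, hgB⟩ := ((dual_dep_iff_forall.mp hD.prop).1 B hBbase)
  have hge : g = e := by
    by_contra hne
    exact (hBbasis.subset hgB).2 ⟨hgD, hne⟩
  subst hge
  have heB : g ∈ B := hgB
  have h1 : g ∈ M.closure (B \ {g}) := by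
    refine M.closure_subset_closure ?_ (hC.mem_closure_diff heC)
    rintro y ⟨hyC, hye⟩
    exact ⟨hCB ⟨hyC, hye⟩, hye⟩
  exact hBbase.indep.notMem_closure_diff_of_mem heB h1

lemma rkN_eq_ncard {M : Matroid α} {B : Set α} (hB : M.IsBase B) : rkN M = B.ncard := by
  have h : Set.ncard '' {B' | M.IsBase B'} = {B.ncard} := by
    ext n
    simp only [mem_image, mem_singleton_iff, mem_setOf_eq]
    constructor
    · rintro ⟨B', hB', rfl⟩; exact hB'.ncard_eq_ncard_of_isBase hB
    · rintro rfl; exact ⟨B, hB, rfl⟩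
  rw [rkN, h, csSup_singleton]

lemma intSet_eq_dual [LinearOrder α] {M : Matroid α} {B : Set α} (hB : B ⊆ M.E) :
    IntSet M B = ExtSet M✶ (M.E \ B) := by
  have h1 : M✶.E \ (M.E \ B) = B := by rw [dual_ground, diff_diff_cancel_left hB]
  ext e
  simp only [IntSet, ExtSet, IntAct, ExtAct, mem_setOf_eq, h1]

lemma extSet_eq_dual [LinearOrder α] {M : Matroid α} {B : Set α} (hB : B ⊆ M.E) :
    ExtSet M B = IntSet M✶ (M.E \ B) := by
  have h1 : M✶.E \ (M.E \ B) = B := by rw [dual_ground, diff_diff_cancel_left hB]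
  ext e
  simp only [IntSet, ExtSet, IntAct, ExtAct, mem_setOf_eq, h1, dual_dual, dual_ground,
    diff_diff_cancel_left hB]

lemma basis_lemma [LinearOrder α] {M : Matroid α} {B : Set α} (hB : M.IsBase B) :
    M.IsBasis (B \ IntSet M B) ((B \ IntSet M B) ∪ ExtSet M B) := by
  have hIndep : M.Indep (B \ IntSet M B) := hB.indep.subset diff_subset
  refine hIndep.isBasis_of_subset_of_subset_closure subset_union_left ?_
  rintro x (hx | hx)
  · exact M.mem_closure_of_mem hx hIndep.subset_ground
  · obtain ⟨⟨hxE, hxB⟩, C, hC, hCsub, hmin⟩ := hx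
    have hCInt : ∀ f ∈ C, f ∉ IntSet M B := by
      rintro f hfC ⟨hfB, D, hD, hDsub, hDmin⟩
      obtain ⟨g, hgC, hgD, hgf⟩ := circ_cocirc_s11 hC hD hfC hDmin.1
      have hge : g = x := by
        rcases mem_insert_iff.mp (hCsub hgC) with rfl | hgB
        · rfl
        · rcases mem_insert_iff.mp (hDsub hgD) with h | h
          · exact absurd h hgf
          · exact absurd hgB h.2
      subst hge
      have hxf : g = f := le_antisymm (hmin.2 _ hfC) (hDmin.2 _ hgD)
      exact hxB (hxf ▸ hfB)
    have hsub : C \ {x} ⊆ B \ IntSet M B := by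
      rintro y ⟨hyC, hyx⟩
      rcases mem_insert_iff.mp (hCsub hyC) with rfl | h
      · exact absurd rfl hyx
      · exact ⟨h, hCInt y hyC⟩
    exact M.closure_subset_closure hsub (hC.mem_closure_diff hmin.1)

/-- For a basis `B` with `X = (B \ Int_M(B)) ∪ Ext_M(B)`, we have
`|Int_M(B)| = r(M/X)` and `|Ext_M(B)| = r*(M|X)`. -/
theorem activities_card_eq_rank [Fintype α] [LinearOrder α] (M : Matroid α)
    (B : Set α) (hB : M.IsBase B) :
    (IntSet M B).ncard = rkN (mcon M ((B \ IntSet M B) ∪ ExtSet M B)) ∧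
    (ExtSet M B).ncard = rkN ((M ↾ ((B \ IntSet M B) ∪ ExtSet M B))✶) := by
  set X := (B \ IntSet M B) ∪ ExtSet M B with hXdef
  have hBE : B ⊆ M.E := hB.subset_ground
  have hIntB : IntSet M B ⊆ B := fun e he => he.1
  have hExtE : ExtSet M B ⊆ M.E \ B := fun e he => he.1
  have hXE : X ⊆ M.E := union_subset (diff_subset.trans hBE) (hExtE.trans diff_subset)
  have hbas : M.IsBasis (B \ IntSet M B) X := basis_lemma hB
  -- second part
  have hrb : (M ↾ X).IsBase (B \ IntSet M B) := (isBase_restrict_iff hXE).2 hbas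
  have hdb := hrb.compl_isBase_dual
  have hXdiff : (M ↾ X).E \ (B \ IntSet M B) = ExtSet M B := by
    rw [restrict_ground_eq, hXdef, union_diff_left]
    ext y
    exact ⟨fun h => h.1, fun h => ⟨h, fun hy => (hExtE h).2 hy.1⟩⟩
  rw [hXdiff] at hdb
  -- first part
  have hbas2 := basis_lemma hB.compl_isBase_dual
  rw [← extSet_eq_dual hBE, ← intSet_eq_dual hBE] at hbas2
  have hunion : ((M.E \ B) \ ExtSet M B) ∪ IntSet M B = M.E \ X := by
    ext y
    constructor
    · rintro (⟨⟨hyE, hyB⟩, hyExt⟩ | hyInt)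
      · refine ⟨hyE, ?_⟩
        rintro (⟨h1, _⟩ | h2)
        · exact hyB h1
        · exact hyExt h2
      · refine ⟨hBE (hIntB hyInt), ?_⟩
        rintro (⟨_, h2⟩ | h3)
        · exact h2 hyInt
        · exact (hExtE h3).2 (hIntB hyInt)
    · rintro ⟨hyE, hyX⟩
      by_cases hyI : y ∈ IntSet M B
      · exact Or.inr hyI
      · exact Or.inl ⟨⟨hyE, fun hyB => hyX (Or.inl ⟨hyB, hyI⟩)⟩, fun hyExt => hyX (Or.inr hyExt)⟩
  rw [hunion] at hbas2
  have hres : (M✶ ↾ (M.E \ X)).IsBase ((M.E \ B) \ ExtSet M B) := by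
    rw [isBase_restrict_iff (show M.E \ X ⊆ M✶.E from diff_subset)]
    exact hbas2
  have hint_sub : IntSet M B ⊆ (M✶ ↾ (M.E \ X)).E := by
    rw [restrict_ground_eq, ← hunion]
    exact fun y hy => Or.inr hy
  have hmcon : (mcon M X).IsBase (IntSet M B) := by
    rw [mcon, dual_ground, dual_isBase_iff hint_sub, restrict_ground_eq]
    have hdd : (M.E \ X) \ IntSet M B = (M.E \ B) \ ExtSet M B := by
      rw [← hunion, union_diff_right]
      ext y
      exact ⟨fun h => h.1, fun h => ⟨h, fun hy => h.1.2 (hIntB hy)⟩⟩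
    rw [hdd]
    exact hres
  exact ⟨(rkN_eq_ncard hmcon).symm, (rkN_eq_ncard hdb).symm⟩
end
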